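/- arXiv:1305.1695 — 3 statements merged into one kernel-verified Lean document; each statement's English description precedes it below -/
import Mathlib

section
/- If φ : b₁ → b₂ is an isomorphism in an additive category C, then the four-term complex segment C → [b₁ ⊕ D] → [b₂ ⊕ E] → F with differentials given by block matrices (α; β), ((φ, δ); (γ, ε)), (μ, ν) is homotopy equivalent to the complex segment C → D → E → F with differentials β, ε − γφ⁻¹δ, ν. -/
open CategoryTheory Limits

/-- Gaussian elimination, homotopy-equivalence form.
If `φ : b₁ ⟶ b₂` is an isomorphism in an additive category, then the four-term complex
segment
`X ⟶ b₁ ⊞ D ⟶ b₂ ⊞ E ⟶ F`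
with differentials the block matrices `(α; β)`, `((φ, δ); (γ, ε))`, `(μ, ν)` is homotopy
equivalent to the complex segment `X ⟶ D ⟶ E ⟶ F` with differentials `β`,
`ε − γ φ⁻¹ δ`, `ν`.  (Segments are regarded as complexes vanishing outside the four
displayed degrees; a homotopy equivalence consists of chain maps in both directions whose
composites are chain homotopic to the identity.) -/
theorem gaussian_elimination_homotopy_equiv
    {C : Type*} [Category C] [Preadditive C] [HasBinaryBiproducts C]
    (X b₁ b₂ D E F : C)
    (α : X ⟶ b₁) (β : X ⟶ D) (φ : b₁ ⟶ b₂) (δ : D ⟶ b₂) (γ : b₁ ⟶ E) (ε : D ⟶ E)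
    (μ : b₂ ⟶ F) (ν : E ⟶ F) [IsIso φ]
    -- the block matrices assemble to a complex segment:
    (h₁ : biprod.lift α β ≫ biprod.desc (biprod.lift φ γ) (biprod.lift δ ε) = 0)
    (h₂ : biprod.desc (biprod.lift φ γ) (biprod.lift δ ε) ≫ biprod.desc μ ν = 0) :
    ∃ (f₀ : X ⟶ X) (f₁ : b₁ ⊞ D ⟶ D) (f₂ : b₂ ⊞ E ⟶ E) (f₃ : F ⟶ F)
      (g₀ : X ⟶ X) (g₁ : D ⟶ b₁ ⊞ D) (g₂ : E ⟶ b₂ ⊞ E) (g₃ : F ⟶ F)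
      (H₁ : b₁ ⊞ D ⟶ X) (H₂ : b₂ ⊞ E ⟶ b₁ ⊞ D) (H₃ : F ⟶ b₂ ⊞ E)
      (K₁ : D ⟶ X) (K₂ : E ⟶ D) (K₃ : F ⟶ E),
      -- `f` is a chain map from the old segment to the new one
      (biprod.lift α β ≫ f₁ = f₀ ≫ β) ∧
      (biprod.desc (biprod.lift φ γ) (biprod.lift δ ε) ≫ f₂
        = f₁ ≫ (ε - δ ≫ inv φ ≫ γ)) ∧
      (biprod.desc μ ν ≫ f₃ = f₂ ≫ ν) ∧
      -- `g` is a chain map from the new segment to the old one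
      (β ≫ g₁ = g₀ ≫ biprod.lift α β) ∧
      ((ε - δ ≫ inv φ ≫ γ) ≫ g₂ = g₁ ≫ biprod.desc (biprod.lift φ γ) (biprod.lift δ ε)) ∧
      (ν ≫ g₃ = g₂ ≫ biprod.desc μ ν) ∧
      -- `H` is a chain homotopy from `f ≫ g` to the identity of the old segment
      (f₀ ≫ g₀ - 𝟙 X = biprod.lift α β ≫ H₁) ∧
      (f₁ ≫ g₁ - 𝟙 (b₁ ⊞ D)
        = H₁ ≫ biprod.lift α β + biprod.desc (biprod.lift φ γ) (biprod.lift δ ε) ≫ H₂) ∧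
      (f₂ ≫ g₂ - 𝟙 (b₂ ⊞ E)
        = H₂ ≫ biprod.desc (biprod.lift φ γ) (biprod.lift δ ε) + biprod.desc μ ν ≫ H₃) ∧
      (f₃ ≫ g₃ - 𝟙 F = H₃ ≫ biprod.desc μ ν) ∧
      -- `K` is a chain homotopy from `g ≫ f` to the identity of the new segment
      (g₀ ≫ f₀ - 𝟙 X = β ≫ K₁) ∧
      (g₁ ≫ f₁ - 𝟙 D = K₁ ≫ β + (ε - δ ≫ inv φ ≫ γ) ≫ K₂) ∧
      (g₂ ≫ f₂ - 𝟙 E = K₂ ≫ (ε - δ ≫ inv φ ≫ γ) + ν ≫ K₃) ∧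
      (g₃ ≫ f₃ - 𝟙 F = K₃ ≫ ν) := by

  have e1 : α ≫ φ + β ≫ δ = 0 := by
    have := h₁ =≫ biprod.fst
    simpa [biprod.lift_desc, Preadditive.add_comp, Category.assoc] using this
  have e3 : φ ≫ μ + γ ≫ ν = 0 := by
    have := biprod.inl ≫= h₂
    simpa [Category.assoc] using this
  have hα : α = -(β ≫ δ ≫ inv φ) := by
    have h : α ≫ φ = -(β ≫ δ) := eq_neg_of_add_eq_zero_left e1
    rw [← cancel_mono φ]
    simp [h, Preadditive.neg_comp, Category.assoc]
  have hμ : μ = -(inv φ ≫ γ ≫ ν) := by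
    rw [← cancel_epi φ]
    simp [Category.assoc]
    rw [eq_neg_of_add_eq_zero_left e3]
  refine ⟨𝟙 X, biprod.snd, biprod.desc (-(inv φ ≫ γ)) (𝟙 E), 𝟙 F,
    𝟙 X, biprod.lift (-(δ ≫ inv φ)) (𝟙 D), biprod.lift 0 (𝟙 E), 𝟙 F,
    0, biprod.fst ≫ (-(inv φ)) ≫ biprod.inl, 0, 0, 0, 0,
    ?_, ?_, ?_, ?_, ?_, ?_, ?_, ?_, ?_, ?_, ?_, ?_, ?_, ?_⟩
  · simp
  · ext <;> simp [biprod.lift_desc, Preadditive.comp_sub, Preadditive.sub_comp]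
    all_goals abel
  · ext <;> simp [hμ, Preadditive.comp_sub]
  · ext <;> simp [hα, biprod.lift_desc, Preadditive.comp_sub, Preadditive.sub_comp]
  · ext <;> simp [biprod.lift_desc, Preadditive.comp_sub, Preadditive.sub_comp]
    all_goals abel
  · simp
  · simp
  · ext <;> simp [biprod.lift_desc, Preadditive.comp_sub, Preadditive.sub_comp,
      Preadditive.comp_neg, Preadditive.neg_comp]
  · ext <;> simp [biprod.lift_desc, Preadditive.comp_sub, Preadditive.sub_comp,
      Preadditive.comp_neg, Preadditive.neg_comp]
  · simp
  · simp
  · simp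
  · simp
  · simp
end

section
/- If φ : b₁ → b₂ is an isomorphism in an additive category C, then the four-term complex segment C → [b₁ ⊕ D] → [b₂ ⊕ E] → F with differentials (α; β), ((φ, δ); (γ, ε)), (μ, ν) is isomorphic (as a complex segment) to the complex segment C → [b₁ ⊕ D] → [b₂ ⊕ E] → F with differentials (0; β), ((φ, 0); (0, ε − γφ⁻¹δ)), (0, ν). -/
open CategoryTheory Limits

/-- Gaussian elimination, isomorphism-of-segments form.
If `φ : b₁ ⟶ b₂` is an isomorphism in an additive category, then the four-term complex
segment
`X ⟶ b₁ ⊞ D ⟶ b₂ ⊞ E ⟶ F`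
with differentials the block matrices `(α; β)`, `((φ, δ); (γ, ε))`, `(μ, ν)` is
isomorphic, via a commuting ladder of isomorphisms, to the complex segment with the same
objects and the (direct sum) differentials `(0; β)`, `((φ, 0); (0, ε − γ φ⁻¹ δ))`,
`(0, ν)`. -/
theorem gaussian_elimination_isomorphism
    {C : Type*} [Category C] [Preadditive C] [HasBinaryBiproducts C]
    (X b₁ b₂ D E F : C)
    (α : X ⟶ b₁) (β : X ⟶ D) (φ : b₁ ⟶ b₂) (δ : D ⟶ b₂) (γ : b₁ ⟶ E) (ε : D ⟶ E)
    (μ : b₂ ⟶ F) (ν : E ⟶ F) [IsIso φ]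
    -- the block matrices assemble to a complex segment:
    (h₁ : biprod.lift α β ≫ biprod.desc (biprod.lift φ γ) (biprod.lift δ ε) = 0)
    (h₂ : biprod.desc (biprod.lift φ γ) (biprod.lift δ ε) ≫ biprod.desc μ ν = 0) :
    ∃ (i₀ : X ≅ X) (i₁ : b₁ ⊞ D ≅ b₁ ⊞ D) (i₂ : b₂ ⊞ E ≅ b₂ ⊞ E) (i₃ : F ≅ F),
      biprod.lift α β ≫ i₁.hom = i₀.hom ≫ biprod.lift (0 : X ⟶ b₁) β ∧
      biprod.desc (biprod.lift φ γ) (biprod.lift δ ε) ≫ i₂.hom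
        = i₁.hom ≫ biprod.desc (biprod.lift φ (0 : b₁ ⟶ E))
            (biprod.lift (0 : D ⟶ b₂) (ε - δ ≫ inv φ ≫ γ)) ∧
      biprod.desc μ ν ≫ i₃.hom = i₂.hom ≫ biprod.desc (0 : b₂ ⟶ F) ν := by
  -- component equations extracted from h₁ and h₂
  have hαφ : α ≫ φ + β ≫ δ = 0 := by
    have := congrArg (· ≫ biprod.fst) h₁
    simpa using this
  have hφμ : φ ≫ μ + γ ≫ ν = 0 := by
    have := congrArg (biprod.inl ≫ ·) h₂
    simpa using this
  have hαφ' : α ≫ φ = -(β ≫ δ) := eq_neg_of_add_eq_zero_left hαφ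
  have hφμ' : φ ≫ μ = -(γ ≫ ν) := eq_neg_of_add_eq_zero_left hφμ
  have hα : α = -(β ≫ δ ≫ inv φ) := by
    have : (α ≫ φ) ≫ inv φ = (-(β ≫ δ)) ≫ inv φ := by rw [hαφ']
    simpa using this
  have hμ : μ = -(inv φ ≫ γ ≫ ν) := by
    have : inv φ ≫ φ ≫ μ = inv φ ≫ (-(γ ≫ ν)) := by rw [hφμ']
    simpa using this
  refine ⟨Iso.refl X, Biprod.unipotentLower (δ ≫ inv φ),
    Biprod.unipotentUpper (-(inv φ ≫ γ)), Iso.refl F, ?_, ?_, ?_⟩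
  · ext
    · simp [Biprod.unipotentLower, Biprod.ofComponents, hα]
    · simp [Biprod.unipotentLower, Biprod.ofComponents]
  · ext
    · simp [Biprod.unipotentLower, Biprod.unipotentUpper, Biprod.ofComponents]
    · simp [Biprod.unipotentLower, Biprod.unipotentUpper, Biprod.ofComponents]
    · simp [Biprod.unipotentLower, Biprod.unipotentUpper, Biprod.ofComponents]
    · simp [Biprod.unipotentLower, Biprod.unipotentUpper, Biprod.ofComponents]
      abel
  · ext
    · simp [Biprod.unipotentUpper, Biprod.ofComponents, hμ]
    · simp [Biprod.unipotentUpper, Biprod.ofComponents]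
end

section
/- Let Ω be a perturbed double complex with Ω_{p,q} = b₁ ⊕ D₀ and Ω_{p+1,q} = b₂ ⊕ E₀, where the b₁-to-b₂ component φ of d⁰ : Ω_{p,q} → Ω_{p+1,q} is an isomorphism. Then the family obtained by replacing Ω_{p,q} by D₀, Ω_{p+1,q} by E₀, and correcting each morphism d^{i+j} : Ω_{p+j,q−j} → Ω_{p−i+1,q+i} to d^{i+j} − γᵢφ⁻¹δⱼ (where γᵢ is the component of dⁱ out of b₁ and δⱼ is the component of d^j into b₂, with the boundary morphisms truncated as in Gaussian elimination) is again a perturbed double complex whose total complex is homotopy equivalent to Tot(Ω). -/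
open DirectSum

noncomputable section

/-- The `(pq, pq')` component of an endomorphism of the total module `⊕_{p,q} Ω_{p,q}`. -/
def entryMap (R : Type) [CommRing R] (M : ℤ × ℤ → Type)
    [∀ pq, AddCommGroup (M pq)] [∀ pq, Module R (M pq)]
    (f : Module.End R (⨁ pq, M pq)) (pq pq' : ℤ × ℤ) : M pq →ₗ[R] M pq' :=
  (DirectSum.component R (ℤ × ℤ) M pq') ∘ₗ f ∘ₗ DirectSum.lof R (ℤ × ℤ) M pq

section GaussianData

variable (R : Type) [CommRing R] (M : ℤ × ℤ → Type)
  [∀ pq, AddCommGroup (M pq)] [∀ pq, Module R (M pq)]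
  (p₀ q₀ : ℤ)
  (b₁ D₀ b₂ E₀ : Type)
  [AddCommGroup b₁] [Module R b₁] [AddCommGroup D₀] [Module R D₀]
  [AddCommGroup b₂] [Module R b₂] [AddCommGroup E₀] [Module R E₀]
  (e₁ : M (p₀, q₀) ≃ₗ[R] b₁ × D₀) (e₂ : M (p₀ + 1, q₀) ≃ₗ[R] b₂ × E₀)
  (d : ℕ → Module.End R (⨁ pq, M pq))

/-- `γᵢ`: the component of `dⁱ` out of the summand `b₁` of `Ω_{p₀,q₀}`. -/
def gam (i : ℕ) : b₁ →ₗ[R] M (p₀ - (i : ℤ) + 1, q₀ + (i : ℤ)) :=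
  entryMap R M (d i) (p₀, q₀) (p₀ - (i : ℤ) + 1, q₀ + (i : ℤ)) ∘ₗ
    e₁.symm.toLinearMap ∘ₗ LinearMap.inl R b₁ D₀

/-- `δⱼ`: the component of `d^j` into the summand `b₂` of `Ω_{p₀+1,q₀}`. -/
def del (j : ℕ) : M (p₀ + (j : ℤ), q₀ - (j : ℤ)) →ₗ[R] b₂ :=
  LinearMap.fst R b₂ E₀ ∘ₗ e₂.toLinearMap ∘ₗ
    entryMap R M (d j) (p₀ + (j : ℤ), q₀ - (j : ℤ)) (p₀ + 1, q₀)

/-- `γ₀`: the `b₁ → E₀` component of `d⁰`. -/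
def gam0 : b₁ →ₗ[R] E₀ :=
  LinearMap.snd R b₂ E₀ ∘ₗ e₂.toLinearMap ∘ₗ
    entryMap R M (d 0) (p₀, q₀) (p₀ + 1, q₀) ∘ₗ e₁.symm.toLinearMap ∘ₗ LinearMap.inl R b₁ D₀

/-- `δ₀`: the `D₀ → b₂` component of `d⁰`. -/
def del0 : D₀ →ₗ[R] b₂ :=
  LinearMap.fst R b₂ E₀ ∘ₗ e₂.toLinearMap ∘ₗ
    entryMap R M (d 0) (p₀, q₀) (p₀ + 1, q₀) ∘ₗ e₁.symm.toLinearMap ∘ₗ LinearMap.inr R b₁ D₀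

/-- `ε₀₀`: the `D₀ → E₀` component of `d⁰`. -/
def eps00 : D₀ →ₗ[R] E₀ :=
  LinearMap.snd R b₂ E₀ ∘ₗ e₂.toLinearMap ∘ₗ
    entryMap R M (d 0) (p₀, q₀) (p₀ + 1, q₀) ∘ₗ e₁.symm.toLinearMap ∘ₗ LinearMap.inr R b₁ D₀

/-- `ε_{i0}`: the component of `dⁱ` out of the summand `D₀` of `Ω_{p₀,q₀}`. -/
def epsOut (i : ℕ) : D₀ →ₗ[R] M (p₀ - (i : ℤ) + 1, q₀ + (i : ℤ)) :=
  entryMap R M (d i) (p₀, q₀) (p₀ - (i : ℤ) + 1, q₀ + (i : ℤ)) ∘ₗ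
    e₁.symm.toLinearMap ∘ₗ LinearMap.inr R b₁ D₀

/-- `ε_{0j}`: the component of `d^j` into the summand `E₀` of `Ω_{p₀+1,q₀}`. -/
def epsIn (j : ℕ) : M (p₀ + (j : ℤ), q₀ - (j : ℤ)) →ₗ[R] E₀ :=
  LinearMap.snd R b₂ E₀ ∘ₗ e₂.toLinearMap ∘ₗ
    entryMap R M (d j) (p₀ + (j : ℤ), q₀ - (j : ℤ)) (p₀ + 1, q₀)

/-- `βⱼ`: the component of `d^j` into the summand `D₀` of `Ω_{p₀,q₀}`. -/
def beta (j : ℕ) : M (p₀ + (j : ℤ) - 1, q₀ - (j : ℤ)) →ₗ[R] D₀ :=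
  LinearMap.snd R b₁ D₀ ∘ₗ e₁.toLinearMap ∘ₗ
    entryMap R M (d j) (p₀ + (j : ℤ) - 1, q₀ - (j : ℤ)) (p₀, q₀)

/-- `νᵢ`: the component of `dⁱ` out of the summand `E₀` of `Ω_{p₀+1,q₀}`. -/
def nu (i : ℕ) : E₀ →ₗ[R] M (p₀ + 1 - (i : ℤ) + 1, q₀ + (i : ℤ)) :=
  entryMap R M (d i) (p₀ + 1, q₀) (p₀ + 1 - (i : ℤ) + 1, q₀ + (i : ℤ)) ∘ₗ
    e₂.symm.toLinearMap ∘ₗ LinearMap.inr R b₂ E₀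

end GaussianData

/-!
Write `Tot Ω = ⨁ M` as `V' ⊕ b₁ ⊕ b₂` with `V' = ⨁ M'`. Since the `b₁ → b₂` block
of the total differential `D = ∑ dⁱ` is the isomorphism `φ`, the map `h = i₁ φ⁻¹ p₂` satisfies
`h² = 0` and `hDh = h`, so `e = 1 - (Dh + hD)` is an idempotent chain map, homotopic to the
identity, which kills `b₁` and lands in the kernel of `p₂`. Hence `π e` and `e ι` are inverse
homotopy equivalences between `(⨁ M, D)` and `(⨁ M', D')` with `D' = πDι - πDhDι`. Splitting
`D'` by the bidegree shift gives `d'ᵏ = π dᵏ ι - ∑_{a+b=k} π dᵃ h dᵇ ι`, whose components are the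
Gaussian elimination formulas; and just as `D² = 0` comes from the relations `∑ᵢ dⁱ dᵏ⁻ⁱ = 0`,
`D'² = 0` gives them back for `d'`.
-/

namespace GaussianElimination

open Finset

theorem isIdempotentElem_mul_add_mul {A : Type*} [Ring A] {D h : A} (hD : D * D = 0)
    (hh : h * h = 0) (hhDh : h * D * h = h) : IsIdempotentElem (D * h + h * D) := by
  calc (D * h + h * D) * (D * h + h * D)
      = D * (h * D * h) + D * (h * h) * D + h * (D * D) * h + h * D * h * D := by noncomm_ring
    _ = D * h + h * D := by rw [hhDh, hh, hD]; noncomm_ring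

theorem commute_mul_add_mul {A : Type*} [Ring A] {D : A} (h : A) (hD : D * D = 0) :
    Commute D (D * h + h * D) := by
  calc D * (D * h + h * D) = D * D * h + D * h * D := by noncomm_ring
    _ = D * h * D + h * (D * D) := by rw [hD]; noncomm_ring
    _ = (D * h + h * D) * D := by noncomm_ring

section HomotopyEquiv

variable {R V V' : Type*} [Ring R] [AddCommGroup V] [Module R V] [AddCommGroup V'] [Module R V']

def IsHomotopyEquiv (D : Module.End R V) (D' : Module.End R V') (f : V →ₗ[R] V')
    (g : V' →ₗ[R] V) (h : Module.End R V) (h' : Module.End R V') : Prop :=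
  f ∘ₗ D = D' ∘ₗ f ∧ g ∘ₗ D' = D ∘ₗ g ∧
    g ∘ₗ f - LinearMap.id = D ∘ₗ h + h ∘ₗ D ∧ f ∘ₗ g - LinearMap.id = D' ∘ₗ h' + h' ∘ₗ D'

theorem IsHomotopyEquiv.mul_self_eq_zero {D : Module.End R V} {D' : Module.End R V'}
    {f : V →ₗ[R] V'} {g : V' →ₗ[R] V} {h : Module.End R V}
    (H : IsHomotopyEquiv D D' f g h 0) (hD : D * D = 0) : D' * D' = 0 := by
  ext y
  have hfg : f (g y) = y := by
    simpa [sub_eq_zero] using LinearMap.congr_fun H.2.2.2 y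
  have hfD (x : V) : f (D x) = D' (f x) := LinearMap.congr_fun H.1 x
  rw [Module.End.mul_apply, ← hfg, ← hfD, ← hfD, ← Module.End.mul_apply D, hD]
  simp

theorem isHomotopyEquiv_of_retract {D e h : Module.End R V} {ι : V' →ₗ[R] V} {π : V →ₗ[R] V'}
    (he : IsIdempotentElem e) (hDe : Commute D e) (hh : e - 1 = D * h + h * D)
    (hπι : π ∘ₗ e ∘ₗ ι = LinearMap.id) (hιπ : e ∘ₗ ι ∘ₗ π ∘ₗ e = e) :
    IsHomotopyEquiv D ((π ∘ₗ e) ∘ₗ D ∘ₗ e ∘ₗ ι) (π ∘ₗ e) (e ∘ₗ ι) h 0 := by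
  have hee (x : V) : e (e x) = e x := LinearMap.congr_fun he.eq x
  have hDe' (x : V) : D (e x) = e (D x) := LinearMap.congr_fun hDe.eq x
  have hιπ' (x : V) : e (ι (π (e x))) = e x := LinearMap.congr_fun hιπ x
  refine ⟨?_, ?_, ?_, ?_⟩
  · ext x
    simp only [LinearMap.comp_apply, hιπ', hDe', hee]
  · ext x
    simp only [LinearMap.comp_apply, hιπ', hDe', hee]
  · rw [LinearMap.comp_assoc, hιπ]
    exact hh
  · have hfg : (π ∘ₗ e) ∘ₗ e ∘ₗ ι = LinearMap.id := by
      ext x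
      simpa [hee] using LinearMap.congr_fun hπι x
    rw [hfg, sub_self, LinearMap.comp_zero, LinearMap.zero_comp, add_zero]

end HomotopyEquiv

/-- A decomposition `V = ι V' ⊕ i₁ B₁ ⊕ i₂ B₂`. -/
structure Splitting (R V V' B₁ B₂ : Type*) [Ring R] [AddCommGroup V] [Module R V]
    [AddCommGroup V'] [Module R V'] [AddCommGroup B₁] [Module R B₁]
    [AddCommGroup B₂] [Module R B₂] where
  ι : V' →ₗ[R] V
  π : V →ₗ[R] V'
  i₁ : B₁ →ₗ[R] V
  p₁ : V →ₗ[R] B₁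
  i₂ : B₂ →ₗ[R] V
  p₂ : V →ₗ[R] B₂
  ι_π_add : ι ∘ₗ π + i₁ ∘ₗ p₁ + i₂ ∘ₗ p₂ = LinearMap.id
  π_ι : π ∘ₗ ι = LinearMap.id
  π_i₁ : π ∘ₗ i₁ = 0
  p₂_ι : p₂ ∘ₗ ι = 0
  p₂_i₁ : p₂ ∘ₗ i₁ = 0

namespace Splitting

variable {R V V' B₁ B₂ : Type*} [Ring R] [AddCommGroup V] [Module R V]
  [AddCommGroup V'] [Module R V'] [AddCommGroup B₁] [Module R B₁]
  [AddCommGroup B₂] [Module R B₂]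
  (S : Splitting R V V' B₁ B₂) (φ : B₁ ≃ₗ[R] B₂) (D : Module.End R V)

def homotopy : Module.End R V := S.i₁ ∘ₗ φ.symm.toLinearMap ∘ₗ S.p₂

def projector : Module.End R V := 1 - (D * S.homotopy φ + S.homotopy φ * D)

def reducedDiff : Module.End R V' :=
  S.π ∘ₗ D ∘ₗ S.ι - S.π ∘ₗ D ∘ₗ S.homotopy φ ∘ₗ D ∘ₗ S.ι

variable {S φ D}

theorem homotopy_mul_self : S.homotopy φ * S.homotopy φ = 0 := by
  ext x
  have hx : S.p₂ (S.i₁ (φ.symm (S.p₂ x))) = 0 := LinearMap.congr_fun S.p₂_i₁ _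
  simp [homotopy, hx]

theorem homotopy_mul_mul_homotopy (hφ : S.p₂ ∘ₗ D ∘ₗ S.i₁ = φ.toLinearMap) :
    S.homotopy φ * D * S.homotopy φ = S.homotopy φ := by
  ext x
  have hx : S.p₂ (D (S.i₁ (φ.symm (S.p₂ x)))) = φ (φ.symm (S.p₂ x)) :=
    LinearMap.congr_fun hφ _
  simp [homotopy, hx]

theorem homotopy_comp_ι : S.homotopy φ ∘ₗ S.ι = 0 := by
  ext x
  have hx : S.p₂ (S.ι x) = 0 := LinearMap.congr_fun S.p₂_ι x
  simp [homotopy, hx]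

theorem π_comp_homotopy : S.π ∘ₗ S.homotopy φ = 0 := by
  ext x
  exact LinearMap.congr_fun S.π_i₁ _

theorem isIdempotentElem_projector (hD : D * D = 0) (hφ : S.p₂ ∘ₗ D ∘ₗ S.i₁ = φ.toLinearMap) :
    IsIdempotentElem (S.projector φ D) :=
  (isIdempotentElem_mul_add_mul hD homotopy_mul_self (homotopy_mul_mul_homotopy hφ)).one_sub

theorem commute_projector (hD : D * D = 0) : Commute D (S.projector φ D) :=
  (Commute.one_right D).sub_right (commute_mul_add_mul _ hD)

theorem projector_comp_i₁ (hφ : S.p₂ ∘ₗ D ∘ₗ S.i₁ = φ.toLinearMap) :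
    S.projector φ D ∘ₗ S.i₁ = 0 := by
  ext b
  have h₁ : S.p₂ (S.i₁ b) = 0 := LinearMap.congr_fun S.p₂_i₁ b
  have h₂ : S.p₂ (D (S.i₁ b)) = φ b := LinearMap.congr_fun hφ b
  simp [projector, homotopy, h₁, h₂]

theorem p₂_comp_projector (hφ : S.p₂ ∘ₗ D ∘ₗ S.i₁ = φ.toLinearMap) :
    S.p₂ ∘ₗ S.projector φ D = 0 := by
  ext x
  have h₁ : S.p₂ (S.i₁ (φ.symm (S.p₂ (D x)))) = 0 := LinearMap.congr_fun S.p₂_i₁ _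
  have h₂ : S.p₂ (D (S.i₁ (φ.symm (S.p₂ x)))) = φ (φ.symm (S.p₂ x)) := LinearMap.congr_fun hφ _
  simp [projector, homotopy, h₁, h₂]

theorem projector_comp_ι_comp_π_comp_projector (hD : D * D = 0)
    (hφ : S.p₂ ∘ₗ D ∘ₗ S.i₁ = φ.toLinearMap) :
    S.projector φ D ∘ₗ S.ι ∘ₗ S.π ∘ₗ S.projector φ D = S.projector φ D := by
  ext x
  have hsplit := LinearMap.congr_fun S.ι_π_add (S.projector φ D x)
  have hp₂ : S.p₂ (S.projector φ D x) = 0 := LinearMap.congr_fun (p₂_comp_projector hφ) x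
  have hi₁ (b : B₁) : S.projector φ D (S.i₁ b) = 0 := LinearMap.congr_fun (projector_comp_i₁ hφ) b
  have hee : S.projector φ D (S.projector φ D x) = S.projector φ D x :=
    LinearMap.congr_fun (isIdempotentElem_projector hD hφ).eq x
  simp only [LinearMap.add_apply, LinearMap.comp_apply, hp₂, map_zero, add_zero,
    LinearMap.id_apply] at hsplit
  simp only [LinearMap.comp_apply, eq_sub_of_add_eq hsplit, map_sub, hi₁, sub_zero, hee]

theorem π_comp_projector_comp_ι : S.π ∘ₗ S.projector φ D ∘ₗ S.ι = LinearMap.id := by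
  ext x
  have hι : S.homotopy φ (S.ι x) = 0 := LinearMap.congr_fun homotopy_comp_ι x
  have hπ : S.π (S.homotopy φ (D (S.ι x))) = 0 := LinearMap.congr_fun π_comp_homotopy _
  have hπι : S.π (S.ι x) = x := LinearMap.congr_fun S.π_ι x
  simp [projector, hι, hπ, hπι]

theorem reducedDiff_eq (hD : D * D = 0) (hφ : S.p₂ ∘ₗ D ∘ₗ S.i₁ = φ.toLinearMap) :
    S.reducedDiff φ D = (S.π ∘ₗ S.projector φ D) ∘ₗ D ∘ₗ S.projector φ D ∘ₗ S.ι := by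
  have heDe : S.projector φ D * D * S.projector φ D = D - D * S.homotopy φ * D := by
    rw [← (commute_projector hD).eq, mul_assoc, (isIdempotentElem_projector hD hφ).eq, projector,
      mul_sub, mul_one, mul_add, ← mul_assoc, hD, zero_mul, zero_add, mul_assoc]
  change _ = S.π ∘ₗ (S.projector φ D * D * S.projector φ D) ∘ₗ S.ι
  rw [heDe]
  simp only [reducedDiff, Module.End.mul_eq_comp, LinearMap.sub_comp, LinearMap.comp_sub,
    LinearMap.comp_assoc]

theorem isHomotopyEquiv (hD : D * D = 0) (hφ : S.p₂ ∘ₗ D ∘ₗ S.i₁ = φ.toLinearMap) :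
    IsHomotopyEquiv D (S.reducedDiff φ D) (S.π ∘ₗ S.projector φ D) (S.projector φ D ∘ₗ S.ι)
      (-S.homotopy φ) 0 := by
  rw [reducedDiff_eq hD hφ]
  refine isHomotopyEquiv_of_retract (isIdempotentElem_projector hD hφ) (commute_projector hD) ?_
    π_comp_projector_comp_ι (projector_comp_ι_comp_π_comp_projector hD hφ)
  simp only [projector, mul_neg, neg_mul]
  abel

end Splitting

theorem sum_range_sum_range_eq_sum_range_diag {A : Type*} [AddCommMonoid A] (n : ℕ)
    (f : ℕ → ℕ → A) (hf : ∀ i j, n ≤ i + j → f i j = 0) :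
    ∑ i ∈ range n, ∑ j ∈ range n, f i j = ∑ k ∈ range n, ∑ i ∈ range (k + 1), f i (k - i) := by
  rw [Finset.sum_range_diag_flip]
  refine Finset.sum_congr rfl fun m _ => (Finset.sum_subset ?_ ?_).symm
  · intro j hj
    simp only [mem_range] at *
    omega
  · intro j hj hj'
    apply hf
    simp only [mem_range] at *
    omega

section TotalDifferential

variable {R : Type*} [Ring R] {M : ℤ × ℤ → Type*} [∀ pq, AddCommGroup (M pq)]
  [∀ pq, Module R (M pq)]

theorem component_eq_zero_of_mem_range {s t : ℤ × ℤ} (h : s ≠ t) {y : ⨁ pq, M pq}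
    (hy : y ∈ LinearMap.range (lof R (ℤ × ℤ) M s)) : component R (ℤ × ℤ) M t y = 0 := by
  obtain ⟨z, rfl⟩ := hy
  rw [component.of, dif_neg h]

theorem eq_zero_of_sum_eq_zero_of_mem_range {n : ℕ} {s : ℕ → ℤ × ℤ} (hs : Function.Injective s)
    {y : ℕ → ⨁ pq, M pq} (hy : ∀ k, y k ∈ LinearMap.range (lof R (ℤ × ℤ) M (s k)))
    (h0 : ∑ k ∈ range n, y k = 0) {k : ℕ} (hk : k < n) : y k = 0 := by
  have hc := congrArg (component R (ℤ × ℤ) M (s k)) h0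
  rw [map_sum, map_zero, Finset.sum_eq_single k
    (fun j _ hne => component_eq_zero_of_mem_range (fun h => hne (hs h)) (hy j))
    (fun h => absurd (mem_range.mpr hk) h)] at hc
  obtain ⟨z, hz⟩ := hy k
  rw [← hz, component.lof_self] at hc
  rw [← hz, hc, map_zero]

variable (R M)

def ShiftsBidegree (d : ℕ → Module.End R (⨁ pq, M pq)) : Prop :=
  ∀ (i : ℕ) (p q : ℤ) (x : M (p, q)),
    d i (lof R (ℤ × ℤ) M (p, q) x) ∈ LinearMap.range (lof R (ℤ × ℤ) M (p - i + 1, q + i))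

def VanishesFrom (d : ℕ → Module.End R (⨁ pq, M pq)) (N : ℤ × ℤ → ℕ) : Prop :=
  ∀ pq i, N pq ≤ i → ∀ x : M pq, d i (lof R (ℤ × ℤ) M pq x) = 0

/-- `Dt` is the total differential `∑ᵢ dⁱ`, the sum being finite on `M pq` by `N pq`. -/
def IsTotalDifferential (d : ℕ → Module.End R (⨁ pq, M pq)) (N : ℤ × ℤ → ℕ)
    (Dt : Module.End R (⨁ pq, M pq)) : Prop :=
  ∀ pq (x : M pq) (n : ℕ), N pq ≤ n →
    Dt (lof R (ℤ × ℤ) M pq x) = ∑ i ∈ range n, d i (lof R (ℤ × ℤ) M pq x)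

def totalDiff (d : ℕ → Module.End R (⨁ pq, M pq)) (N : ℤ × ℤ → ℕ) :
    Module.End R (⨁ pq, M pq) :=
  toModule R (ℤ × ℤ) _ fun pq => (∑ i ∈ range (N pq), d i) ∘ₗ lof R (ℤ × ℤ) M pq

variable {R M} {d : ℕ → Module.End R (⨁ pq, M pq)} {N : ℤ × ℤ → ℕ}
  {Dt : Module.End R (⨁ pq, M pq)}

theorem isTotalDifferential_totalDiff (hN : VanishesFrom R M d N) :
    IsTotalDifferential R M d N (totalDiff R M d N) := by
  intro pq x n hn
  rw [totalDiff, toModule_lof, LinearMap.comp_apply, LinearMap.sum_apply]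
  exact Finset.sum_subset (Finset.range_subset_range.mpr hn)
    (fun i _ hi => hN pq i (by simp only [mem_range] at hi; omega) x)

theorem apply_apply_lof_eq_sum (hd : ShiftsBidegree R M d) (hN : VanishesFrom R M d N)
    (hDt : IsTotalDifferential R M d N Dt) (p q : ℤ) (x : M (p, q)) :
    ∃ C : ℕ, (∀ i j, C ≤ i + j → d i (d j (lof R (ℤ × ℤ) M (p, q) x)) = 0) ∧
      ∀ n ≥ C, Dt (Dt (lof R (ℤ × ℤ) M (p, q) x))
        = ∑ k ∈ range n, ∑ i ∈ range (k + 1), d i (d (k - i) (lof R (ℤ × ℤ) M (p, q) x)) := by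
  classical
  set A := N (p, q)
  set B := (range A).sup fun j : ℕ => N (p - j + 1, q + j)
  -- `dʲ x` lies in a single summand, on which `Dt` is a sum of at most `B` terms
  have hstep (j : ℕ) :
      (∀ n ≥ B, Dt (d j (lof R (ℤ × ℤ) M (p, q) x))
          = ∑ i ∈ range n, d i (d j (lof R (ℤ × ℤ) M (p, q) x))) ∧
        ∀ i ≥ B, d i (d j (lof R (ℤ × ℤ) M (p, q) x)) = 0 := by
    by_cases hj : A ≤ j
    · simp [hN _ j hj]
    · have hle : N (p - j + 1, q + j) ≤ B :=
        Finset.le_sup (f := fun j : ℕ => N (p - j + 1, q + j)) (mem_range.mpr (by omega))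
      obtain ⟨z, hz⟩ := hd j p q x
      rw [← hz]
      exact ⟨fun n hn => hDt _ z n (by omega), fun i hi => hN _ i (by omega) z⟩
  have hvan (i j : ℕ) (hij : A + B ≤ i + j) : d i (d j (lof R (ℤ × ℤ) M (p, q) x)) = 0 := by
    by_cases hj : A ≤ j
    · rw [hN _ j hj, map_zero]
    · exact (hstep j).2 i (by omega)
  refine ⟨A + B, hvan, fun n hn => ?_⟩
  rw [hDt _ x n (by omega), map_sum, Finset.sum_congr rfl fun j _ => (hstep j).1 n (by omega),
    Finset.sum_comm]
  exact sum_range_sum_range_eq_sum_range_diag n _ fun i j hij => hvan i j (by omega)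

theorem mul_self_eq_zero_iff (hd : ShiftsBidegree R M d) (hN : VanishesFrom R M d N)
    (hDt : IsTotalDifferential R M d N Dt) :
    Dt * Dt = 0 ↔ ∀ k : ℕ, ∑ i ∈ range (k + 1), d i ∘ₗ d (k - i) = 0 := by
  constructor
  · intro hsq k
    refine DirectSum.linearMap_ext R fun ⟨p, q⟩ => LinearMap.ext fun x => ?_
    obtain ⟨C, hvan, hsum⟩ := apply_apply_lof_eq_sum hd hN hDt p q x
    simp only [LinearMap.comp_apply, LinearMap.zero_apply, LinearMap.sum_apply]
    by_cases hk : k < C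
    · -- the `k`-th term of `Dt² x = 0` is the only one in bidegree `(p - k + 2, q + k)`
      refine eq_zero_of_sum_eq_zero_of_mem_range (R := R) (s := fun k : ℕ => (p - k + 2, q + k))
        (fun a b h => by simp only [Prod.mk.injEq] at h; omega) (fun k => ?_)
        ((hsum C le_rfl).symm.trans (by rw [← Module.End.mul_apply, hsq]; rfl)) hk
      refine Submodule.sum_mem _ fun i hi => ?_
      obtain ⟨z, hz⟩ := hd (k - i) p q x
      have hslot : ((p - (k - i : ℕ) + 1 - i + 1, q + (k - i : ℕ) + i) : ℤ × ℤ)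
          = (p - k + 2, q + k) := by
        simp only [mem_range] at hi
        push_cast [Nat.cast_sub (by omega : i ≤ k)]
        ext <;> simp only <;> ring
      rw [← hz, ← hslot]
      exact hd i _ _ z
    · exact Finset.sum_eq_zero fun i hi => hvan i (k - i) (by simp only [mem_range] at hi; omega)
  · intro hcomp
    refine DirectSum.linearMap_ext R fun ⟨p, q⟩ => LinearMap.ext fun x => ?_
    obtain ⟨C, -, hsum⟩ := apply_apply_lof_eq_sum hd hN hDt p q x
    rw [LinearMap.comp_apply, Module.End.mul_apply, hsum C le_rfl]
    refine Finset.sum_eq_zero fun k _ => ?_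
    simpa using LinearMap.congr_fun (hcomp k) (lof R (ℤ × ℤ) M (p, q) x)

end TotalDifferential

/-- The identification of `M'` with `M` away from the two eliminated nodes, and of its two nodes
with the complements `D₀ ⊆ M (p₀, q₀) ≅ b₁ × D₀` and `E₀ ⊆ M (p₀ + 1, q₀) ≅ b₂ × E₀`. -/
structure EliminationData (R : Type*) [Ring R] (M M' : ℤ × ℤ → Type*)
    [∀ pq, AddCommGroup (M pq)] [∀ pq, Module R (M pq)]
    [∀ pq, AddCommGroup (M' pq)] [∀ pq, Module R (M' pq)] (p₀ q₀ : ℤ) (b₁ D₀ b₂ E₀ : Type*)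
    [AddCommGroup b₁] [Module R b₁] [AddCommGroup D₀] [Module R D₀]
    [AddCommGroup b₂] [Module R b₂] [AddCommGroup E₀] [Module R E₀] where
  e₁ : M (p₀, q₀) ≃ₗ[R] b₁ × D₀
  e₂ : M (p₀ + 1, q₀) ≃ₗ[R] b₂ × E₀
  n₁ : M' (p₀, q₀) ≃ₗ[R] D₀
  n₂ : M' (p₀ + 1, q₀) ≃ₗ[R] E₀
  nel : ∀ pq : ℤ × ℤ, pq ≠ (p₀, q₀) → pq ≠ (p₀ + 1, q₀) → (M' pq ≃ₗ[R] M pq)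

namespace EliminationData

section

variable {R : Type*} [Ring R] {M M' : ℤ × ℤ → Type*}
  [∀ pq, AddCommGroup (M pq)] [∀ pq, Module R (M pq)]
  [∀ pq, AddCommGroup (M' pq)] [∀ pq, Module R (M' pq)] {p₀ q₀ : ℤ} {b₁ D₀ b₂ E₀ : Type*}
  [AddCommGroup b₁] [Module R b₁] [AddCommGroup D₀] [Module R D₀]
  [AddCommGroup b₂] [Module R b₂] [AddCommGroup E₀] [Module R E₀]
  (X : EliminationData R M M' p₀ q₀ b₁ D₀ b₂ E₀)

theorem node_ne : ((p₀ + 1, q₀) : ℤ × ℤ) ≠ (p₀, q₀) := by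
  simp

def slotIncl (pq : ℤ × ℤ) : M' pq →ₗ[R] M pq :=
  if h₁ : pq = (p₀, q₀) then
    h₁.symm ▸ (X.e₁.symm.toLinearMap ∘ₗ LinearMap.inr R b₁ D₀ ∘ₗ X.n₁.toLinearMap)
  else if h₂ : pq = (p₀ + 1, q₀) then
    h₂.symm ▸ (X.e₂.symm.toLinearMap ∘ₗ LinearMap.inr R b₂ E₀ ∘ₗ X.n₂.toLinearMap)
  else (X.nel pq h₁ h₂).toLinearMap

def slotProj (pq : ℤ × ℤ) : M pq →ₗ[R] M' pq :=
  if h₁ : pq = (p₀, q₀) then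
    h₁.symm ▸ (X.n₁.symm.toLinearMap ∘ₗ LinearMap.snd R b₁ D₀ ∘ₗ X.e₁.toLinearMap)
  else if h₂ : pq = (p₀ + 1, q₀) then
    h₂.symm ▸ (X.n₂.symm.toLinearMap ∘ₗ LinearMap.snd R b₂ E₀ ∘ₗ X.e₂.toLinearMap)
  else (X.nel pq h₁ h₂).symm.toLinearMap

theorem slotIncl_node₁ : X.slotIncl (p₀, q₀)
    = X.e₁.symm.toLinearMap ∘ₗ LinearMap.inr R b₁ D₀ ∘ₗ X.n₁.toLinearMap := by
  simp [slotIncl]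

theorem slotIncl_node₂ : X.slotIncl (p₀ + 1, q₀)
    = X.e₂.symm.toLinearMap ∘ₗ LinearMap.inr R b₂ E₀ ∘ₗ X.n₂.toLinearMap := by
  simp [slotIncl]

theorem slotIncl_of_ne {pq : ℤ × ℤ} (h₁ : pq ≠ (p₀, q₀)) (h₂ : pq ≠ (p₀ + 1, q₀)) :
    X.slotIncl pq = (X.nel pq h₁ h₂).toLinearMap := by
  simp [slotIncl, h₁, h₂]

theorem slotProj_node₁ : X.slotProj (p₀, q₀)
    = X.n₁.symm.toLinearMap ∘ₗ LinearMap.snd R b₁ D₀ ∘ₗ X.e₁.toLinearMap := by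
  simp [slotProj]

theorem slotProj_node₂ : X.slotProj (p₀ + 1, q₀)
    = X.n₂.symm.toLinearMap ∘ₗ LinearMap.snd R b₂ E₀ ∘ₗ X.e₂.toLinearMap := by
  simp [slotProj]

theorem slotProj_of_ne {pq : ℤ × ℤ} (h₁ : pq ≠ (p₀, q₀)) (h₂ : pq ≠ (p₀ + 1, q₀)) :
    X.slotProj pq = (X.nel pq h₁ h₂).symm.toLinearMap := by
  simp [slotProj, h₁, h₂]

def incl : (⨁ pq, M' pq) →ₗ[R] ⨁ pq, M pq :=
  toModule R (ℤ × ℤ) _ fun pq => lof R (ℤ × ℤ) M pq ∘ₗ X.slotIncl pq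

def proj : (⨁ pq, M pq) →ₗ[R] ⨁ pq, M' pq :=
  toModule R (ℤ × ℤ) _ fun pq => lof R (ℤ × ℤ) M' pq ∘ₗ X.slotProj pq

def i₁ : b₁ →ₗ[R] ⨁ pq, M pq :=
  lof R (ℤ × ℤ) M (p₀, q₀) ∘ₗ X.e₁.symm.toLinearMap ∘ₗ LinearMap.inl R b₁ D₀

def p₁ : (⨁ pq, M pq) →ₗ[R] b₁ :=
  LinearMap.fst R b₁ D₀ ∘ₗ X.e₁.toLinearMap ∘ₗ component R (ℤ × ℤ) M (p₀, q₀)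

def i₂ : b₂ →ₗ[R] ⨁ pq, M pq :=
  lof R (ℤ × ℤ) M (p₀ + 1, q₀) ∘ₗ X.e₂.symm.toLinearMap ∘ₗ LinearMap.inl R b₂ E₀

def p₂ : (⨁ pq, M pq) →ₗ[R] b₂ :=
  LinearMap.fst R b₂ E₀ ∘ₗ X.e₂.toLinearMap ∘ₗ component R (ℤ × ℤ) M (p₀ + 1, q₀)

@[simp]
theorem incl_lof (pq : ℤ × ℤ) (x : M' pq) :
    X.incl (lof R (ℤ × ℤ) M' pq x) = lof R (ℤ × ℤ) M pq (X.slotIncl pq x) :=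
  toModule_lof R pq x

@[simp]
theorem proj_lof (pq : ℤ × ℤ) (x : M pq) :
    X.proj (lof R (ℤ × ℤ) M pq x) = lof R (ℤ × ℤ) M' pq (X.slotProj pq x) :=
  toModule_lof R pq x

theorem component_proj (pq : ℤ × ℤ) (y : ⨁ pq, M pq) :
    component R (ℤ × ℤ) M' pq (X.proj y) = X.slotProj pq (component R (ℤ × ℤ) M pq y) := by
  induction y using DirectSum.induction_on with
  | zero => simp
  | of s x =>
    rw [← lof_eq_of R, proj_lof]
    by_cases h : s = pq
    · subst h
      rw [component.lof_self, component.lof_self]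
    · rw [component.of, component.of, dif_neg h, dif_neg h, map_zero]
  | add y z hy hz => simp [hy, hz]

theorem slotProj_comp_slotIncl (pq : ℤ × ℤ) : X.slotProj pq ∘ₗ X.slotIncl pq = LinearMap.id := by
  by_cases h₁ : pq = (p₀, q₀)
  · subst h₁
    ext x
    simp [slotProj_node₁, slotIncl_node₁]
  by_cases h₂ : pq = (p₀ + 1, q₀)
  · subst h₂
    ext x
    simp [slotProj_node₂, slotIncl_node₂]
  ext x
  simp [slotProj_of_ne X h₁ h₂, slotIncl_of_ne X h₁ h₂]

theorem proj_comp_incl : X.proj ∘ₗ X.incl = LinearMap.id := by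
  refine DirectSum.linearMap_ext R fun pq => LinearMap.ext fun x => ?_
  simp [← LinearMap.comp_apply (X.slotProj pq), slotProj_comp_slotIncl]

theorem incl_comp_proj_add : X.incl ∘ₗ X.proj + X.i₁ ∘ₗ X.p₁ + X.i₂ ∘ₗ X.p₂ = LinearMap.id := by
  refine DirectSum.linearMap_ext R fun s => LinearMap.ext fun x => ?_
  simp only [LinearMap.add_apply, LinearMap.comp_apply, proj_lof, incl_lof, LinearMap.id_apply,
    i₁, p₁, i₂, p₂]
  by_cases h₁ : s = (p₀, q₀)
  · subst h₁
    rw [component.lof_self, component_eq_zero_of_mem_range node_ne.symm ⟨x, rfl⟩]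
    simp [slotProj_node₁, slotIncl_node₁, ← map_add, Prod.mk_zero_zero]
  by_cases h₂ : s = (p₀ + 1, q₀)
  · subst h₂
    rw [component.lof_self, component_eq_zero_of_mem_range node_ne ⟨x, rfl⟩]
    simp [slotProj_node₂, slotIncl_node₂, ← map_add, Prod.mk_zero_zero]
  rw [component_eq_zero_of_mem_range h₁ ⟨x, rfl⟩, component_eq_zero_of_mem_range h₂ ⟨x, rfl⟩]
  simp [slotProj_of_ne X h₁ h₂, slotIncl_of_ne X h₁ h₂, Prod.mk_zero_zero]

theorem proj_comp_i₁ : X.proj ∘ₗ X.i₁ = 0 := by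
  ext b
  simp [i₁, slotProj_node₁]

theorem p₂_comp_i₁ : X.p₂ ∘ₗ X.i₁ = 0 := by
  ext b
  simp [i₁, p₂, component_eq_zero_of_mem_range node_ne.symm ⟨_, rfl⟩]

theorem p₂_comp_incl : X.p₂ ∘ₗ X.incl = 0 := by
  refine DirectSum.linearMap_ext R fun s => LinearMap.ext fun x => ?_
  by_cases h₂ : s = (p₀ + 1, q₀)
  · subst h₂
    simp [p₂, slotIncl_node₂]
  · simp [p₂, component_eq_zero_of_mem_range h₂ ⟨_, rfl⟩]

def splitting : Splitting R (⨁ pq, M pq) (⨁ pq, M' pq) b₁ b₂ where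
  ι := X.incl
  π := X.proj
  i₁ := X.i₁
  p₁ := X.p₁
  i₂ := X.i₂
  p₂ := X.p₂
  ι_π_add := X.incl_comp_proj_add
  π_ι := X.proj_comp_incl
  π_i₁ := X.proj_comp_i₁
  p₂_ι := X.p₂_comp_incl
  p₂_i₁ := X.p₂_comp_i₁

variable (φ : b₁ ≃ₗ[R] b₂) (d : ℕ → Module.End R (⨁ pq, M pq))

/-- The correction `γₐ φ⁻¹ δ_b` of Gaussian elimination, through the eliminated summands. -/
def correction (a b : ℕ) : Module.End R (⨁ pq, M' pq) :=
  X.proj ∘ₗ d a ∘ₗ X.i₁ ∘ₗ φ.symm.toLinearMap ∘ₗ X.p₂ ∘ₗ d b ∘ₗ X.incl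

def reducedFamily (k : ℕ) : Module.End R (⨁ pq, M' pq) :=
  X.proj ∘ₗ d k ∘ₗ X.incl - ∑ a ∈ range (k + 1), X.correction φ d a (k - a)

variable {X φ d}

theorem p₂_apply_lof_eq_zero (hd : ShiftsBidegree R M d) {b : ℕ} {p q : ℤ}
    (h : ((p, q) : ℤ × ℤ) ≠ (p₀ + b, q₀ - b)) (y : M (p, q)) :
    X.p₂ (d b (lof R (ℤ × ℤ) M (p, q) y)) = 0 := by
  have hne : ((p - b + 1, q + b) : ℤ × ℤ) ≠ (p₀ + 1, q₀) := by
    simp only [ne_eq, Prod.mk.injEq, not_and] at h ⊢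
    omega
  simp [p₂, component_eq_zero_of_mem_range hne (hd b p q y)]

theorem correction_lof_mem_range (hd : ShiftsBidegree R M d) (a b : ℕ) (pq : ℤ × ℤ)
    (x : M' pq) : X.correction φ d a b (lof R (ℤ × ℤ) M' pq x) ∈
      LinearMap.range (lof R (ℤ × ℤ) M' (p₀ - a + 1, q₀ + a)) := by
  obtain ⟨z, hz⟩ := hd a p₀ q₀ (X.e₁.symm (φ.symm (X.p₂ (d b (X.incl (lof R _ M' pq x)))), 0))
  simp only [correction, i₁, LinearMap.comp_apply, LinearEquiv.coe_coe, LinearMap.inl_apply]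
  rw [← hz, proj_lof]
  exact ⟨_, rfl⟩

theorem correction_lof_eq_zero (hd : ShiftsBidegree R M d) {a b : ℕ} {p q : ℤ}
    (h : ((p, q) : ℤ × ℤ) ≠ (p₀ + b, q₀ - b)) (x : M' (p, q)) :
    X.correction φ d a b (lof R (ℤ × ℤ) M' (p, q) x) = 0 := by
  simp [correction, p₂_apply_lof_eq_zero hd h]

theorem reducedFamily_shiftsBidegree (hd : ShiftsBidegree R M d) :
    ShiftsBidegree R M' (X.reducedFamily φ d) := by
  intro k p q x
  rw [reducedFamily, LinearMap.sub_apply, LinearMap.sum_apply]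
  refine Submodule.sub_mem _ ?_ (Submodule.sum_mem _ fun a ha => ?_)
  · obtain ⟨z, hz⟩ := hd k p q (X.slotIncl (p, q) x)
    rw [LinearMap.comp_apply, LinearMap.comp_apply, incl_lof, ← hz, proj_lof]
    exact ⟨_, rfl⟩
  · by_cases hs : ((p, q) : ℤ × ℤ) = (p₀ + (k - a : ℕ), q₀ - (k - a : ℕ))
    · -- the correction leaves `(p, q)` only through `b₁ ⊆ M (p₀, q₀)`
      have hslot : ((p₀ - a + 1, q₀ + a) : ℤ × ℤ) = (p - k + 1, q + k) := by
        simp only [mem_range, Prod.mk.injEq] at ha hs ⊢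
        omega
      rw [← hslot]
      exact correction_lof_mem_range hd a _ _ x
    · rw [correction_lof_eq_zero hd hs]
      exact Submodule.zero_mem _

theorem reducedFamily_vanishesFrom {N : ℤ × ℤ → ℕ} (hN : VanishesFrom R M d N) :
    VanishesFrom R M' (X.reducedFamily φ d) fun pq => N pq + N (p₀, q₀) := by
  intro pq k (hk : N pq + N (p₀, q₀) ≤ k) x
  have hcorr (a : ℕ) (ha : a < k + 1) : X.correction φ d a (k - a) (lof R _ M' pq x) = 0 := by
    by_cases ha' : N (p₀, q₀) ≤ a
    · simp [correction, i₁, hN _ a ha']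
    · simp [correction, hN pq (k - a) (by omega)]
  simp only [reducedFamily, LinearMap.sub_apply, LinearMap.sum_apply,
    Finset.sum_eq_zero fun a ha => hcorr a (mem_range.mp ha)]
  simp [hN pq k (by omega)]

theorem splitting_reducedDiff_apply (D : Module.End R (⨁ pq, M pq)) (y : ⨁ pq, M' pq) :
    X.splitting.reducedDiff φ D y
      = X.proj (D (X.incl y)) - X.proj (D (X.i₁ (φ.symm (X.p₂ (D (X.incl y)))))) :=
  rfl

theorem isTotalDifferential_reducedDiff {N : ℤ × ℤ → ℕ} {Dt : Module.End R (⨁ pq, M pq)}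
    (hN : VanishesFrom R M d N) (hDt : IsTotalDifferential R M d N Dt) :
    IsTotalDifferential R M' (X.reducedFamily φ d) (fun pq => N pq + N (p₀, q₀))
      (X.splitting.reducedDiff φ Dt) := by
  intro pq x n (hn : N pq + N (p₀, q₀) ≤ n)
  rw [splitting_reducedDiff_apply]
  set y := X.incl (lof R (ℤ × ℤ) M' pq x)
  have hy : Dt y = ∑ j ∈ range n, d j y := by
    simp only [y, incl_lof]
    exact hDt _ _ n (by omega)
  have hi₁ (z : b₁) : Dt (X.i₁ z) = ∑ a ∈ range n, d a (X.i₁ z) :=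
    hDt _ _ n (by omega)
  have hvan (a j : ℕ) (h : n ≤ a + j) : X.proj (d a (X.i₁ (φ.symm (X.p₂ (d j y))))) = 0 := by
    by_cases ha : N (p₀, q₀) ≤ a
    · simp [i₁, hN _ a ha]
    · simp [y, hN pq j (by omega)]
  simp only [hy, hi₁, map_sum]
  rw [Finset.sum_comm, sum_range_sum_range_eq_sum_range_diag n _ hvan, ← Finset.sum_sub_distrib]
  simp [reducedFamily, correction, y]

theorem p₂_comp_comp_i₁ {N : ℤ × ℤ → ℕ} {Dt : Module.End R (⨁ pq, M pq)}
    (hd : ShiftsBidegree R M d) (hDt : IsTotalDifferential R M d N Dt)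
    (hφ : X.p₂ ∘ₗ d 0 ∘ₗ X.i₁ = φ.toLinearMap) : X.p₂ ∘ₗ Dt ∘ₗ X.i₁ = φ.toLinearMap := by
  ext y
  rw [LinearMap.comp_apply, LinearMap.comp_apply, i₁, LinearMap.comp_apply,
    hDt _ _ (max (N (p₀, q₀)) 1) (le_max_left _ _), map_sum,
    Finset.sum_eq_single_of_mem 0 (mem_range.mpr (by omega)) fun i _ hi =>
      p₂_apply_lof_eq_zero hd (by simp only [ne_eq, Prod.mk.injEq]; omega) _]
  exact LinearMap.congr_fun hφ y

end

section

variable {R : Type} [CommRing R] {M M' : ℤ × ℤ → Type}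
  [∀ pq, AddCommGroup (M pq)] [∀ pq, Module R (M pq)]
  [∀ pq, AddCommGroup (M' pq)] [∀ pq, Module R (M' pq)] {p₀ q₀ : ℤ} {b₁ D₀ b₂ E₀ : Type}
  [AddCommGroup b₁] [Module R b₁] [AddCommGroup D₀] [Module R D₀]
  [AddCommGroup b₂] [Module R b₂] [AddCommGroup E₀] [Module R E₀]
  {X : EliminationData R M M' p₀ q₀ b₁ D₀ b₂ E₀} {φ : b₁ ≃ₗ[R] b₂}
  {d : ℕ → Module.End R (⨁ pq, M pq)}

theorem entryMap_reducedFamily (k : ℕ) (s t : ℤ × ℤ) :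
    entryMap R M' (X.reducedFamily φ d k) s t
      = X.slotProj t ∘ₗ entryMap R M (d k) s t ∘ₗ X.slotIncl s
        - ∑ a ∈ range (k + 1), entryMap R M' (X.correction φ d a (k - a)) s t := by
  ext x
  simp [entryMap, reducedFamily, component_proj]

theorem entryMap_correction (a b : ℕ) (s t : ℤ × ℤ) :
    entryMap R M' (X.correction φ d a b) s t
      = (X.slotProj t ∘ₗ entryMap R M (d a) (p₀, q₀) t ∘ₗ X.e₁.symm.toLinearMap ∘ₗ
          LinearMap.inl R b₁ D₀) ∘ₗ φ.symm.toLinearMap ∘ₗ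
        (LinearMap.fst R b₂ E₀ ∘ₗ X.e₂.toLinearMap ∘ₗ entryMap R M (d b) s (p₀ + 1, q₀)) ∘ₗ
          X.slotIncl s := by
  ext x
  simp [entryMap, correction, component_proj, i₁, p₂]

theorem entryMap_correction_eq_zero (hd : ShiftsBidegree R M d) {a b : ℕ} {s t : ℤ × ℤ}
    (h : s = (p₀ + b, q₀ - b) → t ≠ (p₀ - a + 1, q₀ + a)) :
    entryMap R M' (X.correction φ d a b) s t = 0 := by
  ext x
  obtain ⟨p, q⟩ := s
  by_cases hs : ((p, q) : ℤ × ℤ) = (p₀ + b, q₀ - b)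
  · simp only [entryMap, LinearMap.comp_apply, LinearMap.zero_apply]
    exact component_eq_zero_of_mem_range (Ne.symm (h hs)) (correction_lof_mem_range hd a b _ x)
  · simp [entryMap, correction_lof_eq_zero hd hs]

theorem sum_entryMap_correction_eq_zero (hd : ShiftsBidegree R M d) {k : ℕ} {s t : ℤ × ℤ}
    (h : ∀ a ≤ k, s = (p₀ + (k - a : ℕ), q₀ - (k - a : ℕ)) → t ≠ (p₀ - a + 1, q₀ + a)) :
    ∑ a ∈ range (k + 1), entryMap R M' (X.correction φ d a (k - a)) s t = 0 :=
  Finset.sum_eq_zero fun a ha =>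
    entryMap_correction_eq_zero hd (h a (Nat.lt_succ_iff.mp (mem_range.mp ha)))

theorem sum_entryMap_correction_eq_single (hd : ShiftsBidegree R M d) {i k : ℕ} (hik : i ≤ k)
    {s t : ℤ × ℤ} (ht : t = (p₀ - i + 1, q₀ + i)) :
    ∑ a ∈ range (k + 1), entryMap R M' (X.correction φ d a (k - a)) s t
      = entryMap R M' (X.correction φ d i (k - i)) s t := by
  refine Finset.sum_eq_single_of_mem i (mem_range.mpr (by omega)) fun a _ hai => ?_
  refine entryMap_correction_eq_zero hd fun _ hta => hai ?_
  rw [ht, Prod.mk.injEq] at hta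
  omega

variable (X φ)

theorem entryMap_reducedFamily_add (hd : ShiftsBidegree R M d) (i j : ℕ)
    (h₁ : ((p₀ + j, q₀ - j) : ℤ × ℤ) ≠ (p₀, q₀)) (h₂ : ((p₀ + j, q₀ - j) : ℤ × ℤ) ≠ (p₀ + 1, q₀))
    (h₃ : ((p₀ - i + 1, q₀ + i) : ℤ × ℤ) ≠ (p₀, q₀))
    (h₄ : ((p₀ - i + 1, q₀ + i) : ℤ × ℤ) ≠ (p₀ + 1, q₀)) :
    entryMap R M' (X.reducedFamily φ d (i + j)) (p₀ + j, q₀ - j) (p₀ - i + 1, q₀ + i)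
      = (X.nel _ h₃ h₄).symm.toLinearMap ∘ₗ
          (entryMap R M (d (i + j)) (p₀ + j, q₀ - j) (p₀ - i + 1, q₀ + i)
            - gam R M p₀ q₀ b₁ D₀ X.e₁ d i ∘ₗ φ.symm.toLinearMap ∘ₗ
                del R M p₀ q₀ b₂ E₀ X.e₂ d j) ∘ₗ (X.nel _ h₁ h₂).toLinearMap := by
  rw [entryMap_reducedFamily, sum_entryMap_correction_eq_single hd (Nat.le_add_right i j) rfl,
    Nat.add_sub_cancel_left, entryMap_correction, slotProj_of_ne X h₃ h₄, slotIncl_of_ne X h₁ h₂]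
  ext x
  simp [gam, del, entryMap]

theorem entryMap_reducedFamily_of_not_corrected (hd : ShiftsBidegree R M d) (i : ℕ)
    {s t : ℤ × ℤ} (h₁ : s ≠ (p₀, q₀)) (h₂ : s ≠ (p₀ + 1, q₀)) (h₃ : t ≠ (p₀, q₀))
    (h₄ : t ≠ (p₀ + 1, q₀))
    (hst : ¬ ∃ i' j : ℕ, 1 ≤ i' ∧ 1 ≤ j ∧ i = i' + j ∧
      s = (p₀ + (j : ℤ), q₀ - (j : ℤ)) ∧ t = (p₀ - (i' : ℤ) + 1, q₀ + (i' : ℤ))) :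
    entryMap R M' (X.reducedFamily φ d i) s t
      = (X.nel t h₃ h₄).symm.toLinearMap ∘ₗ entryMap R M (d i) s t ∘ₗ
          (X.nel s h₁ h₂).toLinearMap := by
  rw [entryMap_reducedFamily, sum_entryMap_correction_eq_zero hd, sub_zero, slotProj_of_ne X h₃ h₄,
    slotIncl_of_ne X h₁ h₂]
  -- a correction `γₐ φ⁻¹ δ_{i-a}` hitting `(s, t)` has `a ≠ 0` and `i - a ≠ 0` by `h₄` and `h₁`
  rintro a hai rfl rfl
  refine hst ⟨a, i - a, ?_, ?_, by omega, rfl, rfl⟩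
  · by_contra! ha
    exact h₄ (by ext <;> simp <;> omega)
  · by_contra! ha
    exact h₁ (by ext <;> simp <;> omega)

theorem entryMap_reducedFamily_from_node₁ (hd : ShiftsBidegree R M d) (i : ℕ)
    (h₃ : ((p₀ - i + 1, q₀ + i) : ℤ × ℤ) ≠ (p₀, q₀))
    (h₄ : ((p₀ - i + 1, q₀ + i) : ℤ × ℤ) ≠ (p₀ + 1, q₀)) :
    entryMap R M' (X.reducedFamily φ d i) (p₀, q₀) (p₀ - i + 1, q₀ + i)
      = (X.nel _ h₃ h₄).symm.toLinearMap ∘ₗ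
          (epsOut R M p₀ q₀ b₁ D₀ X.e₁ d i - gam R M p₀ q₀ b₁ D₀ X.e₁ d i ∘ₗ
            φ.symm.toLinearMap ∘ₗ del0 R M p₀ q₀ b₁ D₀ b₂ E₀ X.e₁ X.e₂ d) ∘ₗ
          X.n₁.toLinearMap := by
  rw [entryMap_reducedFamily, sum_entryMap_correction_eq_single hd le_rfl rfl, Nat.sub_self,
    entryMap_correction, slotProj_of_ne X h₃ h₄, slotIncl_node₁]
  ext x
  simp [gam, del0, epsOut, entryMap]

theorem entryMap_reducedFamily_to_node₂ (hd : ShiftsBidegree R M d) (j : ℕ)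
    (h₁ : ((p₀ + j, q₀ - j) : ℤ × ℤ) ≠ (p₀, q₀)) (h₂ : ((p₀ + j, q₀ - j) : ℤ × ℤ) ≠ (p₀ + 1, q₀)) :
    X.n₂.toLinearMap ∘ₗ entryMap R M' (X.reducedFamily φ d j) (p₀ + j, q₀ - j) (p₀ + 1, q₀)
      = (epsIn R M p₀ q₀ b₂ E₀ X.e₂ d j - gam0 R M p₀ q₀ b₁ D₀ b₂ E₀ X.e₁ X.e₂ d ∘ₗ
          φ.symm.toLinearMap ∘ₗ del R M p₀ q₀ b₂ E₀ X.e₂ d j) ∘ₗ (X.nel _ h₁ h₂).toLinearMap := by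
  rw [entryMap_reducedFamily, sum_entryMap_correction_eq_single hd (Nat.zero_le j) (by simp),
    Nat.sub_zero, entryMap_correction, slotProj_node₂, slotIncl_of_ne X h₁ h₂]
  ext x
  simp [gam0, del, epsIn, entryMap]

theorem entryMap_reducedFamily_to_node₁ (hd : ShiftsBidegree R M d) (j : ℕ)
    (h₁ : ((p₀ + j - 1, q₀ - j) : ℤ × ℤ) ≠ (p₀, q₀))
    (h₂ : ((p₀ + j - 1, q₀ - j) : ℤ × ℤ) ≠ (p₀ + 1, q₀)) :
    X.n₁.toLinearMap ∘ₗ entryMap R M' (X.reducedFamily φ d j) (p₀ + j - 1, q₀ - j) (p₀, q₀)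
      = beta R M p₀ q₀ b₁ D₀ X.e₁ d j ∘ₗ (X.nel _ h₁ h₂).toLinearMap := by
  rw [entryMap_reducedFamily, sum_entryMap_correction_eq_zero hd fun a _ _ h => by
      rw [Prod.mk.injEq] at h; omega,
    sub_zero, slotProj_node₁, slotIncl_of_ne X h₁ h₂]
  ext x
  simp [beta, entryMap]

theorem entryMap_reducedFamily_from_node₂ (hd : ShiftsBidegree R M d) (i : ℕ)
    (h₃ : ((p₀ + 1 - i + 1, q₀ + i) : ℤ × ℤ) ≠ (p₀, q₀))
    (h₄ : ((p₀ + 1 - i + 1, q₀ + i) : ℤ × ℤ) ≠ (p₀ + 1, q₀)) :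
    entryMap R M' (X.reducedFamily φ d i) (p₀ + 1, q₀) (p₀ + 1 - i + 1, q₀ + i)
      = (X.nel _ h₃ h₄).symm.toLinearMap ∘ₗ nu R M p₀ q₀ b₂ E₀ X.e₂ d i ∘ₗ
          X.n₂.toLinearMap := by
  rw [entryMap_reducedFamily, sum_entryMap_correction_eq_zero hd fun a _ h => by
      rw [Prod.mk.injEq] at h; omega,
    sub_zero, slotProj_of_ne X h₃ h₄, slotIncl_node₂]
  ext x
  simp [nu, entryMap]

theorem entryMap_reducedFamily_zero_node₁_node₂ (hd : ShiftsBidegree R M d) :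
    X.n₂.toLinearMap ∘ₗ entryMap R M' (X.reducedFamily φ d 0) (p₀, q₀) (p₀ + 1, q₀) ∘ₗ
        X.n₁.symm.toLinearMap
      = eps00 R M p₀ q₀ b₁ D₀ b₂ E₀ X.e₁ X.e₂ d - gam0 R M p₀ q₀ b₁ D₀ b₂ E₀ X.e₁ X.e₂ d ∘ₗ
          φ.symm.toLinearMap ∘ₗ del0 R M p₀ q₀ b₁ D₀ b₂ E₀ X.e₁ X.e₂ d := by
  rw [entryMap_reducedFamily, sum_entryMap_correction_eq_single hd le_rfl (by simp),
    entryMap_correction, slotProj_node₂, slotIncl_node₁]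
  ext x
  simp [eps00, gam0, del0, entryMap]

end

end EliminationData

end GaussianElimination

/-- Gaussian elimination in a perturbed double complex.
Let `Ω = (M, d)` be a perturbed double complex with `Ω_{p₀,q₀} ≅ b₁ ⊕ D₀` and
`Ω_{p₀+1,q₀} ≅ b₂ ⊕ E₀` (via `e₁, e₂`), such that the `b₁`-to-`b₂` component `φ` of
`d⁰ : Ω_{p₀,q₀} → Ω_{p₀+1,q₀}` is an isomorphism.  Then on the family `M'` obtained by
replacing `Ω_{p₀,q₀}` by `D₀` and `Ω_{p₀+1,q₀}` by `E₀` (all other objects unchanged,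
via the identifications `n₁, n₂, nel`) there are differentials `d'` given by the
Gaussian-elimination formulas — each `d'^{i+j} : Ω_{p₀+j,q₀−j} → Ω_{p₀−i+1,q₀+i}`
between other nodes is corrected to `d^{i+j} − γᵢ φ⁻¹ δⱼ`, the maps out of `D₀` are
`ε_{i0} − γᵢ φ⁻¹ δ₀`, the maps into `E₀` are `ε_{0j} − γ₀ φ⁻¹ δⱼ`, the maps into `D₀`
and out of `E₀` are the truncations `βⱼ`, `νᵢ`, and all remaining components are
unchanged — such that `(M', d')` is again a perturbed double complex whose total complex
is homotopy equivalent to `Tot Ω`. -/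
theorem gaussian_elimination_perturbed {R : Type} [CommRing R]
    (M : ℤ × ℤ → Type) [∀ pq, AddCommGroup (M pq)] [∀ pq, Module R (M pq)]
    (M' : ℤ × ℤ → Type) [∀ pq, AddCommGroup (M' pq)] [∀ pq, Module R (M' pq)]
    (p₀ q₀ : ℤ)
    (b₁ D₀ b₂ E₀ : Type)
    [AddCommGroup b₁] [Module R b₁] [AddCommGroup D₀] [Module R D₀]
    [AddCommGroup b₂] [Module R b₂] [AddCommGroup E₀] [Module R E₀]
    (e₁ : M (p₀, q₀) ≃ₗ[R] b₁ × D₀) (e₂ : M (p₀ + 1, q₀) ≃ₗ[R] b₂ × E₀)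
    -- the new family: `D₀` at `(p₀,q₀)`, `E₀` at `(p₀+1,q₀)`, unchanged elsewhere
    (n₁ : M' (p₀, q₀) ≃ₗ[R] D₀) (n₂ : M' (p₀ + 1, q₀) ≃ₗ[R] E₀)
    (nel : ∀ pq : ℤ × ℤ, pq ≠ (p₀, q₀) → pq ≠ (p₀ + 1, q₀) → (M' pq ≃ₗ[R] M pq))
    (d : ℕ → Module.End R (⨁ pq, M pq))
    -- each `dⁱ` shifts the bidegree `(p, q)` to `(p − i + 1, q + i)`:
    (hgr : ∀ (i : ℕ) (p q : ℤ) (x : M (p, q)),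
      d i (DirectSum.lof R (ℤ × ℤ) M (p, q) x) ∈
        LinearMap.range (DirectSum.lof R (ℤ × ℤ) M (p - (i : ℤ) + 1, q + (i : ℤ))))
    -- only finitely many `dⁱ` are nonzero on each object:
    (hbd : ∀ pq : ℤ × ℤ, ∃ N : ℕ, ∀ i ≥ N, ∀ x : M pq,
      d i (DirectSum.lof R (ℤ × ℤ) M pq x) = 0)
    -- `Ω` is a perturbed double complex:
    (hcomp : ∀ k : ℕ, ∑ i ∈ Finset.range (k + 1), d i ∘ₗ d (k - i) = 0)
    -- the `b₁`-to-`b₂` component `φ` of `d⁰` is an isomorphism `φe`: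
    (φe : b₁ ≃ₗ[R] b₂)
    (hφ : φe.toLinearMap =
      LinearMap.fst R b₂ E₀ ∘ₗ e₂.toLinearMap ∘ₗ
        entryMap R M (d 0) (p₀, q₀) (p₀ + 1, q₀) ∘ₗ e₁.symm.toLinearMap ∘ₗ
        LinearMap.inl R b₁ D₀) :
    ∃ d' : ℕ → Module.End R (⨁ pq, M' pq),
      -- (A) corrected components between ordinary nodes: `d^{i'+j} − γ_{i'} φ⁻¹ δ_j`
      (∀ i' j : ℕ, 1 ≤ i' → 1 ≤ j →
        ∀ (h1 : ((p₀ + (j : ℤ), q₀ - (j : ℤ)) : ℤ × ℤ) ≠ (p₀, q₀))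
          (h2 : ((p₀ + (j : ℤ), q₀ - (j : ℤ)) : ℤ × ℤ) ≠ (p₀ + 1, q₀))
          (h3 : ((p₀ - (i' : ℤ) + 1, q₀ + (i' : ℤ)) : ℤ × ℤ) ≠ (p₀, q₀))
          (h4 : ((p₀ - (i' : ℤ) + 1, q₀ + (i' : ℤ)) : ℤ × ℤ) ≠ (p₀ + 1, q₀)),
        entryMap R M' (d' (i' + j)) (p₀ + (j : ℤ), q₀ - (j : ℤ))
            (p₀ - (i' : ℤ) + 1, q₀ + (i' : ℤ))
          = (nel _ h3 h4).symm.toLinearMap ∘ₗ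
              (entryMap R M (d (i' + j)) (p₀ + (j : ℤ), q₀ - (j : ℤ))
                  (p₀ - (i' : ℤ) + 1, q₀ + (i' : ℤ))
                - gam R M p₀ q₀ b₁ D₀ e₁ d i' ∘ₗ φe.symm.toLinearMap ∘ₗ
                    del R M p₀ q₀ b₂ E₀ e₂ d j) ∘ₗ
              (nel _ h1 h2).toLinearMap) ∧
      -- (B) all components between ordinary nodes not of the above corrected shape
      --     are unchanged
      (∀ (i : ℕ) (pq pq' : ℤ × ℤ)
        (h1 : pq ≠ (p₀, q₀)) (h2 : pq ≠ (p₀ + 1, q₀))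
        (h3 : pq' ≠ (p₀, q₀)) (h4 : pq' ≠ (p₀ + 1, q₀)),
        (¬ ∃ i' j : ℕ, 1 ≤ i' ∧ 1 ≤ j ∧ i = i' + j ∧
            pq = (p₀ + (j : ℤ), q₀ - (j : ℤ)) ∧
            pq' = (p₀ - (i' : ℤ) + 1, q₀ + (i' : ℤ))) →
        entryMap R M' (d' i) pq pq' = (nel pq' h3 h4).symm.toLinearMap ∘ₗ
          entryMap R M (d i) pq pq' ∘ₗ (nel pq h1 h2).toLinearMap) ∧
      -- (C) components out of the new node `D₀`: `ε_{i0} − γᵢ φ⁻¹ δ₀`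
      (∀ i : ℕ, 1 ≤ i →
        ∀ (h3 : ((p₀ - (i : ℤ) + 1, q₀ + (i : ℤ)) : ℤ × ℤ) ≠ (p₀, q₀))
          (h4 : ((p₀ - (i : ℤ) + 1, q₀ + (i : ℤ)) : ℤ × ℤ) ≠ (p₀ + 1, q₀)),
        entryMap R M' (d' i) (p₀, q₀) (p₀ - (i : ℤ) + 1, q₀ + (i : ℤ))
          = (nel _ h3 h4).symm.toLinearMap ∘ₗ
              (epsOut R M p₀ q₀ b₁ D₀ e₁ d i
                - gam R M p₀ q₀ b₁ D₀ e₁ d i ∘ₗ φe.symm.toLinearMap ∘ₗ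
                    del0 R M p₀ q₀ b₁ D₀ b₂ E₀ e₁ e₂ d) ∘ₗ n₁.toLinearMap) ∧
      -- (D) components into the new node `E₀`: `ε_{0j} − γ₀ φ⁻¹ δⱼ`
      (∀ j : ℕ, 1 ≤ j →
        ∀ (h1 : ((p₀ + (j : ℤ), q₀ - (j : ℤ)) : ℤ × ℤ) ≠ (p₀, q₀))
          (h2 : ((p₀ + (j : ℤ), q₀ - (j : ℤ)) : ℤ × ℤ) ≠ (p₀ + 1, q₀)),
        n₂.toLinearMap ∘ₗ
            entryMap R M' (d' j) (p₀ + (j : ℤ), q₀ - (j : ℤ)) (p₀ + 1, q₀)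
          = (epsIn R M p₀ q₀ b₂ E₀ e₂ d j
              - gam0 R M p₀ q₀ b₁ D₀ b₂ E₀ e₁ e₂ d ∘ₗ φe.symm.toLinearMap ∘ₗ
                  del R M p₀ q₀ b₂ E₀ e₂ d j) ∘ₗ (nel _ h1 h2).toLinearMap) ∧
      -- (E) components into the new node `D₀` are the truncations `βⱼ`
      (∀ j : ℕ, 1 ≤ j →
        ∀ (h1 : ((p₀ + (j : ℤ) - 1, q₀ - (j : ℤ)) : ℤ × ℤ) ≠ (p₀, q₀))
          (h2 : ((p₀ + (j : ℤ) - 1, q₀ - (j : ℤ)) : ℤ × ℤ) ≠ (p₀ + 1, q₀)),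
        n₁.toLinearMap ∘ₗ
            entryMap R M' (d' j) (p₀ + (j : ℤ) - 1, q₀ - (j : ℤ)) (p₀, q₀)
          = beta R M p₀ q₀ b₁ D₀ e₁ d j ∘ₗ (nel _ h1 h2).toLinearMap) ∧
      -- (F) components out of the new node `E₀` are the truncations `νᵢ`
      (∀ i : ℕ,
        ∀ (h3 : ((p₀ + 1 - (i : ℤ) + 1, q₀ + (i : ℤ)) : ℤ × ℤ) ≠ (p₀, q₀))
          (h4 : ((p₀ + 1 - (i : ℤ) + 1, q₀ + (i : ℤ)) : ℤ × ℤ) ≠ (p₀ + 1, q₀)),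
        entryMap R M' (d' i) (p₀ + 1, q₀) (p₀ + 1 - (i : ℤ) + 1, q₀ + (i : ℤ))
          = (nel _ h3 h4).symm.toLinearMap ∘ₗ
              nu R M p₀ q₀ b₂ E₀ e₂ d i ∘ₗ n₂.toLinearMap) ∧
      -- (G) the `D₀ → E₀` component of `d'⁰` is `ε₀₀ − γ₀ φ⁻¹ δ₀`
      (n₂.toLinearMap ∘ₗ entryMap R M' (d' 0) (p₀, q₀) (p₀ + 1, q₀) ∘ₗ
          n₁.symm.toLinearMap
        = eps00 R M p₀ q₀ b₁ D₀ b₂ E₀ e₁ e₂ d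
            - gam0 R M p₀ q₀ b₁ D₀ b₂ E₀ e₁ e₂ d ∘ₗ φe.symm.toLinearMap ∘ₗ
                del0 R M p₀ q₀ b₁ D₀ b₂ E₀ e₁ e₂ d) ∧
      -- `(M', d')` is again a perturbed double complex:
      (∀ (i : ℕ) (p q : ℤ) (x : M' (p, q)),
        d' i (DirectSum.lof R (ℤ × ℤ) M' (p, q) x) ∈
          LinearMap.range (DirectSum.lof R (ℤ × ℤ) M' (p - (i : ℤ) + 1, q + (i : ℤ)))) ∧
      (∀ pq : ℤ × ℤ, ∃ N : ℕ, ∀ i ≥ N, ∀ x : M' pq,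
        d' i (DirectSum.lof R (ℤ × ℤ) M' pq x) = 0) ∧
      (∀ k : ℕ, ∑ i ∈ Finset.range (k + 1), d' i ∘ₗ d' (k - i) = 0) ∧
      -- and its total complex is homotopy equivalent to `Tot Ω`:
      ∃ (Dtot : Module.End R (⨁ pq, M pq)) (Dtot' : Module.End R (⨁ pq, M' pq)),
        (∀ (pq : ℤ × ℤ) (x : M pq), ∃ N : ℕ, ∀ N' ≥ N,
          Dtot (DirectSum.lof R (ℤ × ℤ) M pq x)
            = ∑ i ∈ Finset.range N', d i (DirectSum.lof R (ℤ × ℤ) M pq x)) ∧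
        (∀ (pq : ℤ × ℤ) (x : M' pq), ∃ N : ℕ, ∀ N' ≥ N,
          Dtot' (DirectSum.lof R (ℤ × ℤ) M' pq x)
            = ∑ i ∈ Finset.range N', d' i (DirectSum.lof R (ℤ × ℤ) M' pq x)) ∧
        ∃ (f : (⨁ pq, M pq) →ₗ[R] ⨁ pq, M' pq)
          (g : (⨁ pq, M' pq) →ₗ[R] ⨁ pq, M pq)
          (h : Module.End R (⨁ pq, M pq)) (h' : Module.End R (⨁ pq, M' pq)),
          f ∘ₗ Dtot = Dtot' ∘ₗ f ∧ g ∘ₗ Dtot' = Dtot ∘ₗ g ∧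
          g ∘ₗ f - LinearMap.id = Dtot ∘ₗ h + h ∘ₗ Dtot ∧
          f ∘ₗ g - LinearMap.id = Dtot' ∘ₗ h' + h' ∘ₗ Dtot' := by
  open GaussianElimination EliminationData in
  choose N hN using hbd
  let X : EliminationData R M M' p₀ q₀ b₁ D₀ b₂ E₀ := ⟨e₁, e₂, n₁, n₂, nel⟩
  have hDt := isTotalDifferential_totalDiff hN
  have hsq := (mul_self_eq_zero_iff hgr hN hDt).2 hcomp
  have H := X.splitting.isHomotopyEquiv hsq (X.p₂_comp_comp_i₁ hgr hDt hφ.symm)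
  have hd' := X.reducedFamily_shiftsBidegree (φ := φe) hgr
  have hN' := X.reducedFamily_vanishesFrom (φ := φe) hN
  have hDt' := X.isTotalDifferential_reducedDiff (φ := φe) hN hDt
  exact ⟨X.reducedFamily φe d,
    fun i j _ _ => X.entryMap_reducedFamily_add φe hgr i j,
    fun i _ _ => X.entryMap_reducedFamily_of_not_corrected φe hgr i,
    fun i _ => X.entryMap_reducedFamily_from_node₁ φe hgr i,
    fun j _ => X.entryMap_reducedFamily_to_node₂ φe hgr j,
    fun j _ => X.entryMap_reducedFamily_to_node₁ φe hgr j,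
    X.entryMap_reducedFamily_from_node₂ φe hgr,
    X.entryMap_reducedFamily_zero_node₁_node₂ φe hgr,
    hd', fun pq => ⟨_, hN' pq⟩, (mul_self_eq_zero_iff hd' hN' hDt').1 (H.mul_self_eq_zero hsq),
    _, _, fun pq x => ⟨N pq, hDt pq x⟩, fun pq x => ⟨_, hDt' pq x⟩, _, _, _, _, H⟩
end
end
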